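/- (Varshamov–Gilbert bound) Let Ω = {0,1}^m with m > 8. Then there exists a subset {w^(0), w^(1), …, w^(M)} of Ω with w^(0) = (0,…,0), M ≥ 2^{m/8}, such that the Hamming distance between any two distinct elements w^(j), w^(k) is at least m/8. -/

import Mathlib

/-!
A code of minimum distance greater than `r` that cannot be enlarged has the property that
the Hamming balls of radius `r` around its words cover the cube `{0,1}^m`, so it has at least
`2 ^ m / V` words, where `V = ∑_{i ≤ r} C(m, i)` is the volume of such a ball. Comparing `V` with
the binomial expansion of `8 ^ m = (1 + 7) ^ m` gives `V * 7 ^ (m - r) ≤ 8 ^ m`, and for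
`r = ⌊m / 8⌋` this makes the code larger than `2 * 2 ^ (m / 8)`.
-/

open Finset

section HammingCode

variable {ι : Type*} [Fintype ι]

theorem card_hammingBall_le [DecidableEq ι] (w : ι → Bool) (r : ℕ) :
    #{v : ι → Bool | hammingDist v w ≤ r} ≤
      ∑ i ∈ range (r + 1), (Fintype.card ι).choose i := by
  calc #{v : ι → Bool | hammingDist v w ≤ r}
      ≤ #((range (r + 1)).biUnion fun i => powersetCard i (univ : Finset ι)) := by
        refine card_le_card_of_injOn (fun v => ({j | v j ≠ w j} : Finset ι)) (fun v hv => ?_) ?_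
        · simp only [coe_filter, mem_univ, true_and] at hv
          simp only [coe_biUnion, coe_range, Set.mem_Iio, Set.mem_iUnion, mem_coe,
            mem_powersetCard, exists_prop]
          exact ⟨_, Nat.lt_succ_of_le hv, subset_univ _, rfl⟩
        · intro a _ b _ hab
          funext j
          have hj := congrArg (j ∈ ·) hab
          simp only [mem_filter, mem_univ, true_and, eq_iff_iff] at hj
          -- over `Bool`, a coordinate is determined by whether it differs from `w j`
          revert hj
          cases a j <;> cases b j <;> cases w j <;> decide
    _ ≤ ∑ i ∈ range (r + 1), #(powersetCard i (univ : Finset ι)) := card_biUnion_le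
    _ = ∑ i ∈ range (r + 1), (Fintype.card ι).choose i := by
      simp only [card_powersetCard, card_univ]

theorem exists_code_covering {β : Type*} [DecidableEq β] [Fintype β] (x₀ : ι → β) (r : ℕ) :
    ∃ S : Finset (ι → β), x₀ ∈ S ∧
      (S : Set (ι → β)).Pairwise (fun a b => r < hammingDist a b) ∧
      ∀ v, ∃ u ∈ S, hammingDist v u ≤ r := by
  classical
  let IsCode : Finset (ι → β) → Prop := fun S =>
    x₀ ∈ S ∧ (S : Set (ι → β)).Pairwise (fun a b => r < hammingDist a b)
  have hsingleton : IsCode {x₀} := ⟨mem_singleton_self x₀, by simp⟩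
  obtain ⟨S, hS, hmax⟩ := exists_max_image ({S | IsCode S} : Finset _) card
    ⟨{x₀}, mem_filter.mpr ⟨mem_univ _, hsingleton⟩⟩
  obtain ⟨hx₀, hdist⟩ := (mem_filter.mp hS).2
  refine ⟨S, hx₀, hdist, fun v => ?_⟩
  by_contra! hfar
  have hv : v ∉ S := fun hv => by simpa using hfar v hv
  have hinsert : IsCode (insert v S) := by
    refine ⟨mem_insert_of_mem hx₀, ?_⟩
    rw [coe_insert, Set.pairwise_insert]
    exact ⟨hdist, fun u hu _ => ⟨hfar u hu, hammingDist_comm v u ▸ hfar u hu⟩⟩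
  have := hmax _ (mem_filter.mpr ⟨mem_univ _, hinsert⟩)
  rw [card_insert_of_notMem hv] at this
  omega

theorem exists_code_two_pow_le_card_mul [DecidableEq ι] (x₀ : ι → Bool) (r : ℕ) :
    ∃ S : Finset (ι → Bool), x₀ ∈ S ∧
      (S : Set (ι → Bool)).Pairwise (fun a b => r < hammingDist a b) ∧
      2 ^ Fintype.card ι ≤ #S * ∑ i ∈ range (r + 1), (Fintype.card ι).choose i := by
  obtain ⟨S, hx₀, hdist, hcover⟩ := exists_code_covering x₀ r
  refine ⟨S, hx₀, hdist, ?_⟩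
  have hunion : (univ : Finset (ι → Bool)) ⊆ S.biUnion fun u => {v | hammingDist v u ≤ r} :=
    fun v _ => by simpa using hcover v
  calc 2 ^ Fintype.card ι = #(univ : Finset (ι → Bool)) := by simp
    _ ≤ #(S.biUnion fun u => {v | hammingDist v u ≤ r}) := card_le_card hunion
    _ ≤ ∑ u ∈ S, #{v : ι → Bool | hammingDist v u ≤ r} := card_biUnion_le
    _ ≤ ∑ _u ∈ S, ∑ i ∈ range (r + 1), (Fintype.card ι).choose i :=
      sum_le_sum fun u _ => card_hammingBall_le u r
    _ = #S * ∑ i ∈ range (r + 1), (Fintype.card ι).choose i := by rw [sum_const, smul_eq_mul]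

end HammingCode

theorem sum_range_choose_mul_pow_le {n r a : ℕ} (hr : r ≤ n) (ha : 1 ≤ a) :
    (∑ i ∈ range (r + 1), n.choose i) * a ^ (n - r) ≤ (1 + a) ^ n := by
  calc (∑ i ∈ range (r + 1), n.choose i) * a ^ (n - r)
      = ∑ i ∈ range (r + 1), n.choose i * a ^ (n - r) := sum_mul ..
    _ ≤ ∑ i ∈ range (r + 1), n.choose i * a ^ (n - i) :=
      sum_le_sum fun i hi => Nat.mul_le_mul_left _ <|
        Nat.pow_le_pow_right ha (by have := mem_range.mp hi; omega)
    _ ≤ ∑ i ∈ range (n + 1), n.choose i * a ^ (n - i) :=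
      sum_le_sum_of_subset (range_subset_range.mpr (by omega))
    _ = (1 + a) ^ n := by
      rw [add_pow]
      exact sum_congr rfl fun i _ => by rw [one_pow, one_mul, mul_comm, Nat.cast_id]

theorem two_pow_mul_le_seven_pow {m : ℕ} (hm : 4 ≤ m) : 256 * 2 ^ (17 * m) ≤ 7 ^ (7 * m) := by
  rw [pow_mul, pow_mul]
  calc 256 * (2 ^ 17) ^ m ≤ 6 ^ m * (2 ^ 17) ^ m :=
        Nat.mul_le_mul_right _
          ((by norm_num : 256 ≤ 6 ^ 4).trans (Nat.pow_le_pow_right (by norm_num) hm))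
    _ = (6 * 2 ^ 17) ^ m := (mul_pow ..).symm
    _ ≤ (7 ^ 7) ^ m := Nat.pow_le_pow_left (by norm_num) m

theorem pow_eight_ge_of_two_pow_le_mul {m r c V : ℕ} (hm : 4 ≤ m) (hr : 8 * r ≤ m)
    (hc : 2 ^ m ≤ c * V) (hV : V * 7 ^ (m - r) ≤ 8 ^ m) : 256 * 2 ^ m ≤ c ^ 8 := by
  have hlower : 2 ^ m * 7 ^ (m - r) ≤ c * 8 ^ m :=
    calc 2 ^ m * 7 ^ (m - r) ≤ c * V * 7 ^ (m - r) := Nat.mul_le_mul_right _ hc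
      _ = c * (V * 7 ^ (m - r)) := mul_assoc ..
      _ ≤ c * 8 ^ m := Nat.mul_le_mul_left _ hV
  refine Nat.le_of_mul_le_mul_right ?_ (pow_pos (by norm_num : 0 < 2) (24 * m))
  calc 256 * 2 ^ m * 2 ^ (24 * m) = 256 * 2 ^ (17 * m) * 2 ^ (8 * m) := by
        rw [mul_assoc, mul_assoc, ← pow_add, ← pow_add]; ring_nf
    _ ≤ 7 ^ (7 * m) * 2 ^ (8 * m) := Nat.mul_le_mul_right _ (two_pow_mul_le_seven_pow hm)
    _ ≤ 7 ^ (8 * (m - r)) * 2 ^ (8 * m) :=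
      Nat.mul_le_mul_right _ (Nat.pow_le_pow_right (by norm_num) (by omega))
    _ = (2 ^ m * 7 ^ (m - r)) ^ 8 := by ring
    _ ≤ (c * 8 ^ m) ^ 8 := Nat.pow_le_pow_left hlower 8
    _ = c ^ 8 * 2 ^ (24 * m) := by
      rw [mul_pow, ← pow_mul, show (8 : ℕ) = 2 ^ 3 from rfl, ← pow_mul]; ring_nf

theorem two_mul_two_rpow_div_eight_le {m c : ℕ} (h : 256 * 2 ^ m ≤ c ^ 8) :
    2 * (2 : ℝ) ^ ((m : ℝ) / 8) ≤ c := by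
  refine le_of_pow_le_pow_left₀ (n := 8) (by norm_num) (by positivity) ?_
  rw [mul_pow, ← Real.rpow_mul_natCast (by norm_num), Nat.cast_ofNat,
    div_mul_cancel₀ _ (by norm_num), Real.rpow_natCast]
  exact_mod_cast h

theorem Finset.exists_injective_fin_succ_zero_eq {α : Type*} {s : Finset α} {a : α}
    (ha : a ∈ s) :
    ∃ (n : ℕ) (w : Fin (n + 1) → α),
      n + 1 = #s ∧ w 0 = a ∧ Function.Injective w ∧ ∀ j, w j ∈ s := by
  obtain ⟨n, hn⟩ := Nat.exists_eq_succ_of_ne_zero (card_ne_zero_of_mem ha)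
  let e : Fin (n + 1) ≃ s := (s.equivFin.trans (finCongr hn)).symm
  refine ⟨n, fun j => e (Equiv.swap 0 (e.symm ⟨a, ha⟩) j), hn.symm, by simp, ?_,
    fun j => (e _).2⟩
  exact Subtype.val_injective.comp (e.injective.comp (Equiv.injective _))

theorem varshamov_gilbert (m : ℕ) (hm : 8 < m) :
    ∃ (M : ℕ) (w : Fin (M + 1) → Fin m → Bool),
      (2 : ℝ) ^ ((m : ℝ) / 8) ≤ (M : ℝ) ∧
      w 0 = (fun _ => false) ∧
      ∀ j k : Fin (M + 1), j ≠ k → (m : ℝ) / 8 ≤ (hammingDist (w j) (w k) : ℝ) := by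
  obtain ⟨S, hzero, hdist, hcard⟩ :=
    exists_code_two_pow_le_card_mul (fun _ : Fin m => false) (m / 8)
  rw [Fintype.card_fin] at hcard
  have hcard8 : 256 * 2 ^ m ≤ #S ^ 8 := pow_eight_ge_of_two_pow_le_mul (by omega)
    (Nat.mul_div_le m 8) hcard (sum_range_choose_mul_pow_le (Nat.div_le_self m 8) (by norm_num))
  obtain ⟨M, w, hM, hw0, hwinj, hwS⟩ := exists_injective_fin_succ_zero_eq hzero
  refine ⟨M, w, ?_, hw0, fun j k hjk => ?_⟩
  · have hS := two_mul_two_rpow_div_eight_le hcard8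
    have hone : 1 ≤ (2 : ℝ) ^ ((m : ℝ) / 8) := Real.one_le_rpow (by norm_num) (by positivity)
    rw [← hM, Nat.cast_succ] at hS
    linarith
  · have hm8 : (m : ℝ) / 8 ≤ (m / 8 + 1 : ℕ) := by
      rw [div_le_iff₀ (by norm_num)]
      exact_mod_cast (by omega : m ≤ (m / 8 + 1) * 8)
    exact hm8.trans (by exact_mod_cast hdist (hwS j) (hwS k) (hwinj.ne hjk))
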